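/- Let u_θ be an MLP with scalar input and output in which all hidden layers have the same width d (d₁ = ⋯ = d_L = d), with all biases equal to zero, and suppose the entries of the weight matrices W⁽¹⁾,…,W⁽ᴸ⁺¹⁾ are jointly independent square-integrable real random variables on a probability space, each with mean zero, where every entry of W⁽¹⁾ and of W⁽ᴸ⁺¹⁾ has variance 2/(d+1) and every entry of W⁽ˡ⁾ for 2 ≤ l ≤ L has variance 1/d. Assume σ : ℝ → ℝ is differentiable with measurable derivative satisfying |σ'(t)| ≤ 1 for all t ∈ ℝ. Then for every fixed x ∈ ℝ, the random variable ω ↦ ∂u_θ/∂x (x) is square-integrable and Var(∂u_θ/∂x (x)) ≤ 4/d. -/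

import Mathlib

open Matrix MeasureTheory ProbabilityTheory

/-!
By the chain rule, `∂u⁽ˡ⁺¹⁾/∂x = W⁽ˡ⁺¹⁾ (σ'(u⁽ˡ⁾) ⊙ ∂u⁽ˡ⁾/∂x)`. Each row of `W⁽ˡ⁺¹⁾` is centred
and independent of the earlier weights, which determine the vector it multiplies; hence the cross
terms vanish and
`E[(∂u⁽ˡ⁺¹⁾ᵢ/∂x)²] = Var W⁽ˡ⁺¹⁾ · ∑ⱼ E[(σ'(u⁽ˡ⁾ⱼ) ∂u⁽ˡ⁾ⱼ/∂x)²] ≤ Var W⁽ˡ⁺¹⁾ · ∑ⱼ E[(∂u⁽ˡ⁾ⱼ/∂x)²]`.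
Summed over a layer of width `d`, the first layer gives `2d/(d+1)`, every hidden layer multiplies
by `d · 1/d = 1`, and the output layer by `2/(d+1)`, so
`Var(∂u_θ/∂x) ≤ E[(∂u_θ/∂x)²] ≤ 4d/(d+1)² ≤ 4/d`.
-/

/-- The pre-activation values `u⁽ˡ⁺¹⁾(x)` of an MLP with scalar input,
dimensions `d`, weights `W`, biases `b` and activation `σ`:
`u⁽¹⁾(x) = W⁽¹⁾ x + b⁽¹⁾` and `u⁽ˡ⁺¹⁾(x) = W⁽ˡ⁺¹⁾ σ(u⁽ˡ⁾(x)) + b⁽ˡ⁺¹⁾`.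
Here `mlpPre d W b σ l` is `u⁽ˡ⁺¹⁾`, so `W l` is the weight matrix `W⁽ˡ⁺¹⁾`. -/
noncomputable def mlpPre (d : ℕ → ℕ)
    (W : (l : ℕ) → Matrix (Fin (d (l + 1))) (Fin (d l)) ℝ)
    (b : (l : ℕ) → Fin (d (l + 1)) → ℝ) (σ : ℝ → ℝ) :
    (l : ℕ) → ℝ → Fin (d (l + 1)) → ℝ
  | 0, x => W 0 *ᵥ (fun _ => x) + b 0
  | l + 1, x => W (l + 1) *ᵥ (fun i => σ (mlpPre d W b σ l x i)) + b (l + 1)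

-- The derivative at `x` of the activations `g⁽ˡ⁾`, where `g⁽⁰⁾(x) = x`.
noncomputable def mlpActDeriv (d : ℕ → ℕ)
    (W : (l : ℕ) → Matrix (Fin (d (l + 1))) (Fin (d l)) ℝ)
    (b : (l : ℕ) → Fin (d (l + 1)) → ℝ) (σ : ℝ → ℝ) :
    (l : ℕ) → ℝ → Fin (d l) → ℝ
  | 0, _ => 1
  | l + 1, x => fun j => deriv σ (mlpPre d W b σ l x j) * (W l *ᵥ mlpActDeriv d W b σ l x) j

theorem hasDerivAt_mulVec_apply {m n : Type*} [Fintype n] (A : Matrix m n ℝ) {g : ℝ → n → ℝ}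
    {g' : n → ℝ} {x : ℝ} (hg : ∀ j, HasDerivAt (fun t => g t j) (g' j) x) (i : m) :
    HasDerivAt (fun t => (A *ᵥ g t) i) ((A *ᵥ g') i) x := by
  simp only [mulVec, dotProduct]
  exact HasDerivAt.fun_sum fun j _ => (hg j).const_mul (A i j)

theorem Measurable.mulVec_apply {α m n : Type*} {mα : MeasurableSpace α} [Fintype n]
    {A : α → Matrix m n ℝ} {v : α → n → ℝ} (hA : ∀ i j, Measurable fun a => A a i j)
    (hv : ∀ j, Measurable fun a => v a j) (i : m) : Measurable fun a => (A a *ᵥ v a) i := by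
  simp only [mulVec, dotProduct]
  exact Finset.measurable_sum _ fun j _ => (hA i j).mul (hv j)

theorem measurable_biSup_comap {Ω κ β : Type*} [mβ : MeasurableSpace β] {f : κ → Ω → β}
    {T : Set κ} {k : κ} (hk : k ∈ T) :
    Measurable[⨆ j ∈ T, MeasurableSpace.comap (f j) mβ] (f k) :=
  (comap_measurable (f k)).mono (le_biSup (fun j => MeasurableSpace.comap (f j) mβ) hk) le_rfl

section Deterministic

variable {d : ℕ → ℕ} {W : (l : ℕ) → Matrix (Fin (d (l + 1))) (Fin (d l)) ℝ}
  {b : (l : ℕ) → Fin (d (l + 1)) → ℝ} {σ : ℝ → ℝ}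

theorem hasDerivAt_mlpPre (hσ : Differentiable ℝ σ) (l : ℕ) (x : ℝ) (i : Fin (d (l + 1))) :
    HasDerivAt (fun t => mlpPre d W b σ l t i) ((W l *ᵥ mlpActDeriv d W b σ l x) i) x := by
  induction l with
  | zero =>
    exact (hasDerivAt_mulVec_apply (W 0) (fun _ => hasDerivAt_id x) i).add_const (b 0 i)
  | succ l ih =>
    exact (hasDerivAt_mulVec_apply (W (l + 1))
      (fun j => (hσ _).hasDerivAt.comp x (ih j)) i).add_const (b (l + 1) i)

theorem abs_mlpActDeriv_succ_le (hσ : ∀ t, |deriv σ t| ≤ 1) (n : ℕ) (x : ℝ)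
    (j : Fin (d (n + 1))) :
    |mlpActDeriv d W b σ (n + 1) x j| ≤ |(W n *ᵥ mlpActDeriv d W b σ n x) j| := by
  rw [mlpActDeriv, abs_mul]
  exact mul_le_of_le_one_left (abs_nonneg _) (hσ _)

end Deterministic

section Measurability

variable {α : Type*} {mα : MeasurableSpace α} {d : ℕ → ℕ}
  {V : (l : ℕ) → α → Matrix (Fin (d (l + 1))) (Fin (d l)) ℝ}
  {b : (l : ℕ) → Fin (d (l + 1)) → ℝ} {σ : ℝ → ℝ}

theorem measurable_mlpPre (hσ : Measurable σ) {n : ℕ}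
    (hV : ∀ l ≤ n, ∀ i j, Measurable fun a => V l a i j) (x : ℝ) (i : Fin (d (n + 1))) :
    Measurable fun a => mlpPre d (V · a) b σ n x i := by
  induction n with
  | zero => exact (Measurable.mulVec_apply (hV 0 le_rfl) (fun _ => measurable_const) i).add_const _
  | succ n ih =>
    exact (Measurable.mulVec_apply (hV (n + 1) le_rfl)
      (fun j => hσ.comp (ih (fun l hl => hV l (hl.trans n.le_succ)) j)) i).add_const _

theorem measurable_mlpActDeriv (hσ : Measurable σ) (hσ' : Measurable (deriv σ)) {n : ℕ}
    (hV : ∀ l < n, ∀ i j, Measurable fun a => V l a i j) (x : ℝ) (j : Fin (d n)) :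
    Measurable fun a => mlpActDeriv d (V · a) b σ n x j := by
  induction n with
  | zero => exact measurable_const
  | succ n ih =>
    exact (hσ'.comp (measurable_mlpPre hσ (fun l hl => hV l (Nat.lt_succ_of_le hl)) x j)).mul
      (Measurable.mulVec_apply (hV n n.lt_succ_self)
        (ih fun l hl => hV l (hl.trans n.lt_succ_self)) j)

end Measurability

namespace ProbabilityTheory

variable {Ω : Type*} {mΩ : MeasurableSpace Ω} {μ : Measure Ω}

theorem IndepFun.memLp_two_mul {X Y : Ω → ℝ} (h : IndepFun X Y μ)
    (hX : MemLp X 2 μ) (hY : MemLp Y 2 μ) : MemLp (fun ω => X ω * Y ω) 2 μ := by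
  rw [memLp_two_iff_integrable_sq (f := fun ω => X ω * Y ω) (hX.1.mul hY.1)]
  simp_rw [mul_pow]
  exact (h.comp (measurable_id.pow_const 2) (measurable_id.pow_const 2)).integrable_mul
    hX.integrable_sq hY.integrable_sq

theorem integral_sum_mul_sq_of_indepFun [IsProbabilityMeasure μ] {ι : Type*} [Fintype ι]
    {X Y : ι → Ω → ℝ} (hX : ∀ j, MemLp (X j) 2 μ) (hXmean : ∀ j, μ[X j] = 0)
    (hY : ∀ j, MemLp (Y j) 2 μ) (hdiag : ∀ j, IndepFun (X j) (Y j) μ)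
    (hcross : ∀ j k, j ≠ k → IndepFun (X j) (fun ω => Y j ω * (X k ω * Y k ω)) μ) :
    ∫ ω, (∑ j, X j ω * Y j ω) ^ 2 ∂μ = ∑ j, (∫ ω, X j ω ^ 2 ∂μ) * ∫ ω, Y j ω ^ 2 ∂μ := by
  have hXY j : MemLp (fun ω => X j ω * Y j ω) 2 μ := (hdiag j).memLp_two_mul (hX j) (hY j)
  have hint j k : Integrable (fun ω => (X j ω * Y j ω) * (X k ω * Y k ω)) μ :=
    (hXY j).integrable_mul (hXY k)
  have hcross_zero j k (hjk : j ≠ k) :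
      ∫ ω, (X j ω * Y j ω) * (X k ω * Y k ω) ∂μ = 0 := by
    have h := (hcross j k hjk).integral_mul_eq_mul_integral (hX j).1
      ((hY j).1.mul ((hX k).1.mul (hY k).1))
    simp only [Pi.mul_apply, hXmean j, zero_mul] at h
    rw [← h]
    congr 1 with ω
    ring
  have hdiag_sq j :
      ∫ ω, (X j ω * Y j ω) ^ 2 ∂μ = (∫ ω, X j ω ^ 2 ∂μ) * ∫ ω, Y j ω ^ 2 ∂μ := by
    simp_rw [mul_pow]
    exact ((hdiag j).comp (measurable_id.pow_const 2) (measurable_id.pow_const 2))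
      |>.integral_mul_eq_mul_integral ((hX j).1.pow 2) ((hY j).1.pow 2)
  calc ∫ ω, (∑ j, X j ω * Y j ω) ^ 2 ∂μ
      = ∑ j, ∑ k, ∫ ω, (X j ω * Y j ω) * (X k ω * Y k ω) ∂μ := by
        simp_rw [sq, Finset.sum_mul_sum]
        rw [integral_finsetSum _ fun j _ => integrable_finsetSum _ fun k _ => hint j k]
        exact Finset.sum_congr rfl fun j _ => integral_finsetSum _ fun k _ => hint j k
    _ = ∑ j, ∫ ω, (X j ω * Y j ω) ^ 2 ∂μ := by
        refine Finset.sum_congr rfl fun j _ => ?_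
        rw [Finset.sum_eq_single j (fun k _ hkj => hcross_zero j k hkj.symm) (by simp)]
        simp only [sq]
    _ = _ := Finset.sum_congr rfl fun j _ => hdiag_sq j

namespace iIndepFun

variable {κ : Type*} {f : κ → Ω → ℝ}

theorem indepFun_of_measurable_biSup (hf : iIndepFun f μ) (hmeas : ∀ k, Measurable (f k))
    {k : κ} {T : Set κ} (hk : k ∉ T) {Z : Ω → ℝ}
    (hZ : Measurable[⨆ j ∈ T, MeasurableSpace.comap (f j) inferInstance] Z) :
    IndepFun (f k) Z μ := by
  have h := indep_iSup_of_disjoint (fun j => (hmeas j).comap_le) hf.iIndep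
    (Set.disjoint_singleton_left.2 hk)
  rw [iSup_singleton] at h
  exact (IndepFun_iff_Indep _ _ _).2 (indep_of_indep_of_le_right h hZ.comap_le)

theorem integral_sum_mul_sq [IsProbabilityMeasure μ] {ι : Type*} [Fintype ι]
    (hf : iIndepFun f μ) (hmeas : ∀ k, Measurable (f k)) {p : ι → κ} (hp : p.Injective)
    (hX : ∀ j, MemLp (f (p j)) 2 μ) (hXmean : ∀ j, μ[f (p j)] = 0)
    {T : Set κ} (hpT : ∀ j, p j ∉ T) {Y : ι → Ω → ℝ}
    (hYT : ∀ j, Measurable[⨆ k ∈ T, MeasurableSpace.comap (f k) inferInstance] (Y j))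
    (hY : ∀ j, MemLp (Y j) 2 μ) :
    ∫ ω, (∑ j, f (p j) ω * Y j ω) ^ 2 ∂μ
      = ∑ j, (∫ ω, f (p j) ω ^ 2 ∂μ) * ∫ ω, Y j ω ^ 2 ∂μ := by
  refine integral_sum_mul_sq_of_indepFun hX hXmean hY
    (fun j => hf.indepFun_of_measurable_biSup hmeas (hpT j) (hYT j)) fun j k hjk => ?_
  have hle : (⨆ k ∈ T, MeasurableSpace.comap (f k) inferInstance)
      ≤ ⨆ k' ∈ insert (p k) T, MeasurableSpace.comap (f k') inferInstance :=
    biSup_mono fun _ => Set.mem_insert_of_mem _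
  refine hf.indepFun_of_measurable_biSup hmeas ?_ (((hYT j).mono hle le_rfl).mul
    ((measurable_biSup_comap (Set.mem_insert _ _)).mul ((hYT k).mono hle le_rfl)))
  exact fun h => (Set.mem_insert_iff.1 h).elim (fun h => hjk (hp h)) (hpT j)

end iIndepFun

end ProbabilityTheory

abbrev MLPWeightIndex (L : ℕ) (d : ℕ → ℕ) : Type :=
  (l : Fin (L + 1)) × (Fin (d (l.1 + 1)) × Fin (d l.1))

section RandomMLP

variable {Ω : Type*} {mΩ : MeasurableSpace Ω} {μ : Measure Ω} {L : ℕ} {d : ℕ → ℕ}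
  {W : (l : ℕ) → Ω → Matrix (Fin (d (l + 1))) (Fin (d l)) ℝ}
  {b : (l : ℕ) → Fin (d (l + 1)) → ℝ} {σ : ℝ → ℝ}

abbrev mlpWeightsBelow (L : ℕ) (d : ℕ → ℕ)
    (W : (l : ℕ) → Ω → Matrix (Fin (d (l + 1))) (Fin (d l)) ℝ) (n : ℕ) : MeasurableSpace Ω :=
  ⨆ p ∈ {p : MLPWeightIndex L d | p.1.1 < n},
    MeasurableSpace.comap (fun ω => W p.1 ω p.2.1 p.2.2) inferInstance

theorem measurable_mlpActDeriv_mlpWeightsBelow (hσ : Continuous σ) (hσ' : Measurable (deriv σ))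
    {n : ℕ} (hn : n ≤ L + 1) (x : ℝ) (j : Fin (d n)) :
    Measurable[mlpWeightsBelow L d W n] fun ω => mlpActDeriv d (W · ω) b σ n x j :=
  measurable_mlpActDeriv (mα := mlpWeightsBelow L d W n) hσ.measurable hσ'
    (fun l hl i j => measurable_biSup_comap (k := ⟨⟨l, by omega⟩, i, j⟩)
      (f := fun (p : MLPWeightIndex L d) ω => W p.1 ω p.2.1 p.2.2) hl) x j

theorem memLp_mulVec_mlpActDeriv (hWmeas : ∀ l i j, Measurable fun ω => W l ω i j)
    (hWindep : iIndepFun (fun p : MLPWeightIndex L d => fun ω => W p.1 ω p.2.1 p.2.2) μ)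
    (hWL2 : ∀ l i j, MemLp (fun ω => W l ω i j) 2 μ)
    (hσ : Continuous σ) (hσ' : Measurable (deriv σ)) {n : ℕ} (hn : n ≤ L) (x : ℝ)
    (hact : ∀ j, MemLp (fun ω => mlpActDeriv d (W · ω) b σ n x j) 2 μ) (i : Fin (d (n + 1))) :
    MemLp (fun ω => (W n ω *ᵥ mlpActDeriv d (W · ω) b σ n x) i) 2 μ := by
  simp only [mulVec, dotProduct]
  refine memLp_finsetSum _ fun j _ => IndepFun.memLp_two_mul ?_ (hWL2 n i j) (hact j)
  exact hWindep.indepFun_of_measurable_biSup (fun p => hWmeas p.1 p.2.1 p.2.2)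
    (k := ⟨⟨n, by omega⟩, i, j⟩) (T := {p | p.1.1 < n}) (lt_irrefl n)
    (measurable_mlpActDeriv_mlpWeightsBelow hσ hσ' (by omega) x j)

theorem integral_sq_mulVec_mlpActDeriv [IsProbabilityMeasure μ]
    (hWmeas : ∀ l i j, Measurable fun ω => W l ω i j)
    (hWindep : iIndepFun (fun p : MLPWeightIndex L d => fun ω => W p.1 ω p.2.1 p.2.2) μ)
    (hWL2 : ∀ l i j, MemLp (fun ω => W l ω i j) 2 μ)
    (hWmean : ∀ l, l ≤ L → ∀ i j, ∫ ω, W l ω i j ∂μ = 0)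
    (hσ : Continuous σ) (hσ' : Measurable (deriv σ)) {n : ℕ} (hn : n ≤ L) (x : ℝ)
    (hact : ∀ j, MemLp (fun ω => mlpActDeriv d (W · ω) b σ n x j) 2 μ) (i : Fin (d (n + 1)))
    {s : ℝ} (hWsq : ∀ j, ∫ ω, W n ω i j ^ 2 ∂μ = s) :
    ∫ ω, (W n ω *ᵥ mlpActDeriv d (W · ω) b σ n x) i ^ 2 ∂μ
      = s * ∑ j, ∫ ω, mlpActDeriv d (W · ω) b σ n x j ^ 2 ∂μ := by
  simp only [mulVec, dotProduct]
  refine (hWindep.integral_sum_mul_sq (fun p => hWmeas p.1 p.2.1 p.2.2)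
    (p := fun j => ⟨⟨n, by omega⟩, i, j⟩) (fun j k h => by simpa using h)
    (fun j => hWL2 n i j) (fun j => hWmean n hn i j) (T := {p | p.1.1 < n})
    (fun _ => lt_irrefl n) (fun j => measurable_mlpActDeriv_mlpWeightsBelow hσ hσ' (by omega) x j)
    hact).trans ?_
  simp only [hWsq, Finset.mul_sum]

theorem memLp_mlpActDeriv [IsProbabilityMeasure μ]
    (hWmeas : ∀ l i j, Measurable fun ω => W l ω i j)
    (hWindep : iIndepFun (fun p : MLPWeightIndex L d => fun ω => W p.1 ω p.2.1 p.2.2) μ)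
    (hWL2 : ∀ l i j, MemLp (fun ω => W l ω i j) 2 μ)
    (hσ : Continuous σ) (hσ' : Measurable (deriv σ)) (hσbound : ∀ t, |deriv σ t| ≤ 1) (x : ℝ)
    {n : ℕ} (hn : n ≤ L + 1) (j : Fin (d n)) :
    MemLp (fun ω => mlpActDeriv d (W · ω) b σ n x j) 2 μ := by
  induction n with
  | zero => exact memLp_const 1
  | succ n ih =>
    refine (memLp_mulVec_mlpActDeriv hWmeas hWindep hWL2 hσ hσ' (by omega) x
      (fun k => ih (by omega) k) j).of_le
      (measurable_mlpActDeriv hσ.measurable hσ' (fun l _ => hWmeas l) x j).aestronglyMeasurable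
      (Filter.Eventually.of_forall fun ω => ?_)
    simpa only [Real.norm_eq_abs] using abs_mlpActDeriv_succ_le hσbound n x j

theorem sum_integral_sq_mlpActDeriv_succ_le [IsProbabilityMeasure μ]
    (hWmeas : ∀ l i j, Measurable fun ω => W l ω i j)
    (hWindep : iIndepFun (fun p : MLPWeightIndex L d => fun ω => W p.1 ω p.2.1 p.2.2) μ)
    (hWL2 : ∀ l i j, MemLp (fun ω => W l ω i j) 2 μ)
    (hWmean : ∀ l, l ≤ L → ∀ i j, ∫ ω, W l ω i j ∂μ = 0)
    (hσ : Continuous σ) (hσ' : Measurable (deriv σ)) (hσbound : ∀ t, |deriv σ t| ≤ 1) (x : ℝ)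
    {n : ℕ} (hn : n ≤ L) {s : ℝ} (hWsq : ∀ i j, ∫ ω, W n ω i j ^ 2 ∂μ = s) :
    ∑ i, ∫ ω, mlpActDeriv d (W · ω) b σ (n + 1) x i ^ 2 ∂μ
      ≤ d (n + 1) * (s * ∑ j, ∫ ω, mlpActDeriv d (W · ω) b σ n x j ^ 2 ∂μ) := by
  have hact := memLp_mlpActDeriv (b := b) hWmeas hWindep hWL2 hσ hσ' hσbound x (n := n) (by omega)
  calc ∑ i, ∫ ω, mlpActDeriv d (W · ω) b σ (n + 1) x i ^ 2 ∂μ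
      ≤ ∑ i, ∫ ω, (W n ω *ᵥ mlpActDeriv d (W · ω) b σ n x) i ^ 2 ∂μ :=
        Finset.sum_le_sum fun i _ => integral_mono
          (memLp_mlpActDeriv hWmeas hWindep hWL2 hσ hσ' hσbound x (by omega) i).integrable_sq
          (memLp_mulVec_mlpActDeriv hWmeas hWindep hWL2 hσ hσ' hn x hact i).integrable_sq
          fun ω => sq_le_sq.2 (abs_mlpActDeriv_succ_le hσbound n x i)
    _ = ∑ _i : Fin (d (n + 1)), s * ∑ j, ∫ ω, mlpActDeriv d (W · ω) b σ n x j ^ 2 ∂μ :=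
        Finset.sum_congr rfl fun i _ => integral_sq_mulVec_mlpActDeriv hWmeas hWindep hWL2
          hWmean hσ hσ' hn x hact i (hWsq i)
    _ = _ := by simp

theorem sum_integral_sq_mlpActDeriv_le [IsProbabilityMeasure μ] {m : ℕ} (hm : 1 ≤ m)
    (h0 : d 0 = 1) (hdm : ∀ l, 1 ≤ l → l ≤ L → d l = m)
    (hWmeas : ∀ l i j, Measurable fun ω => W l ω i j)
    (hWindep : iIndepFun (fun p : MLPWeightIndex L d => fun ω => W p.1 ω p.2.1 p.2.2) μ)
    (hWL2 : ∀ l i j, MemLp (fun ω => W l ω i j) 2 μ)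
    (hWmean : ∀ l, l ≤ L → ∀ i j, ∫ ω, W l ω i j ∂μ = 0)
    (hWsqFirst : ∀ i j, ∫ ω, W 0 ω i j ^ 2 ∂μ = 2 / (m + 1))
    (hWsqMid : ∀ l, 1 ≤ l → l < L → ∀ i j, ∫ ω, W l ω i j ^ 2 ∂μ = 1 / m)
    (hσ : Continuous σ) (hσ' : Measurable (deriv σ)) (hσbound : ∀ t, |deriv σ t| ≤ 1) (x : ℝ)
    {n : ℕ} (hn : 1 ≤ n) (hnL : n ≤ L) :
    ∑ j, ∫ ω, mlpActDeriv d (W · ω) b σ n x j ^ 2 ∂μ ≤ 2 * m / (m + 1) := by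
  have hstep k (hk : k ≤ L) s (hs : ∀ i j, ∫ ω, W k ω i j ^ 2 ∂μ = s) :=
    sum_integral_sq_mlpActDeriv_succ_le (b := b) hWmeas hWindep hWL2 hWmean hσ hσ' hσbound x hk hs
  induction n, hn using Nat.le_induction with
  | base =>
    refine (hstep 0 (by omega) _ hWsqFirst).trans_eq ?_
    simp [mlpActDeriv, h0, hdm 1 le_rfl hnL]
    ring
  | succ n hn ih =>
    have hm' : (0 : ℝ) < m := by exact_mod_cast hm
    calc _ ≤ d (n + 1) * (1 / m * ∑ j, ∫ ω, mlpActDeriv d (W · ω) b σ n x j ^ 2 ∂μ) :=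
          hstep n (by omega) _ (hWsqMid n hn (by omega))
      _ ≤ m * (1 / m * (2 * m / (m + 1))) := by
          rw [hdm (n + 1) (by omega) hnL]
          gcongr
          exact ih (by omega)
      _ = 2 * m / (m + 1) := by field_simp

end RandomMLP

theorem variance_mlp_deriv_le_general
    {Ω : Type*} [MeasurableSpace Ω] (μ : Measure Ω) [IsProbabilityMeasure μ]
    (L m : ℕ) (hL : 1 ≤ L) (hm : 1 ≤ m)
    (d : ℕ → ℕ) (h0 : d 0 = 1)
    (hdm : ∀ l, 1 ≤ l → l ≤ L → d l = m)
    (W : (l : ℕ) → Ω → Matrix (Fin (d (l + 1))) (Fin (d l)) ℝ)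
    (hWmeas : ∀ l i j, Measurable fun ω => W l ω i j)
    (hWL2 : ∀ l i j, MemLp (fun ω => W l ω i j) 2 μ)
    (hWindep : iIndepFun
      (fun p : (l : Fin (L + 1)) × (Fin (d (l.1 + 1)) × Fin (d l.1)) =>
        fun ω => W p.1 ω p.2.1 p.2.2) μ)
    (hWmean : ∀ l, l ≤ L → ∀ i j, ∫ ω, W l ω i j ∂μ = 0)
    (hvarFirst : ∀ i j, variance (fun ω => W 0 ω i j) μ = 2 / (m + 1))
    (hvarLast : ∀ i j, variance (fun ω => W L ω i j) μ = 2 / (m + 1))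
    (hvarMid : ∀ l, 1 ≤ l → l < L → ∀ i j, variance (fun ω => W l ω i j) μ = 1 / m)
    (σ : ℝ → ℝ) (hσ : Differentiable ℝ σ)
    (hσ' : Measurable (deriv σ)) (hσbound : ∀ t, |deriv σ t| ≤ 1)
    (x : ℝ) (i : Fin (d (L + 1))) :
    MemLp (fun ω =>
      deriv (fun t => mlpPre d (fun l => W l ω) (fun _ => 0) σ L t i) x) 2 μ ∧
    variance (fun ω =>
      deriv (fun t => mlpPre d (fun l => W l ω) (fun _ => 0) σ L t i) x) μ ≤ 4 / m := by
  have hWsq l (hl : l ≤ L) i j : ∫ ω, W l ω i j ^ 2 ∂μ = variance (fun ω => W l ω i j) μ :=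
    (variance_of_integral_eq_zero (hWmeas l i j).aemeasurable (hWmean l hl i j)).symm
  have hderiv ω : deriv (fun t => mlpPre d (fun l => W l ω) (fun _ => 0) σ L t i) x
      = (W L ω *ᵥ mlpActDeriv d (W · ω) (fun _ => 0) σ L x) i :=
    (hasDerivAt_mlpPre hσ L x i).deriv
  have hact := memLp_mlpActDeriv (b := fun _ => 0) hWmeas hWindep hWL2 hσ.continuous hσ' hσbound x
    (n := L) (by omega)
  have hv := memLp_mulVec_mlpActDeriv hWmeas hWindep hWL2 hσ.continuous hσ' le_rfl x hact i
  simp only [hderiv]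
  refine ⟨hv, ?_⟩
  have hm' : (1 : ℝ) ≤ m := by exact_mod_cast hm
  calc variance _ μ ≤ ∫ ω, (W L ω *ᵥ mlpActDeriv d (W · ω) (fun _ => 0) σ L x) i ^ 2 ∂μ :=
        variance_le_expectation_sq hv.1
    _ = 2 / (m + 1) * ∑ j, ∫ ω, mlpActDeriv d (W · ω) (fun _ => 0) σ L x j ^ 2 ∂μ :=
        integral_sq_mulVec_mlpActDeriv hWmeas hWindep hWL2 hWmean hσ.continuous hσ' le_rfl x
          hact i fun j => (hWsq L le_rfl i j).trans (hvarLast i j)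
    _ ≤ 2 / (m + 1) * (2 * m / (m + 1)) := by
        gcongr
        exact sum_integral_sq_mlpActDeriv_le hm h0 hdm hWmeas hWindep hWL2 hWmean
          (fun i j => (hWsq 0 (by omega) i j).trans (hvarFirst i j))
          (fun l hl hlL i j => (hWsq l hlL.le i j).trans (hvarMid l hl hlL i j))
          hσ.continuous hσ' hσbound x hL le_rfl
    _ ≤ 4 / m := by
        rw [div_mul_div_comm, div_le_div_iff₀ (by positivity) (by positivity)]
        nlinarith

/-- For a randomly initialized MLP with scalar input and output,
hidden widths all equal to `m`, zero biases, jointly independent mean-zero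
square-integrable weight entries with Glorot variances (`2/(m+1)` for the first and last
layers, `1/m` for the middle layers), and a differentiable activation `σ` with measurable
derivative bounded by `1`, the random variable `ω ↦ ∂u_θ/∂x (x)` is square-integrable and
its variance is at most `4 / m`. -/
theorem variance_mlp_deriv_le
    {Ω : Type*} [MeasurableSpace Ω] (μ : Measure Ω) [IsProbabilityMeasure μ]
    (L m : ℕ) (hL : 1 ≤ L) (hm : 1 ≤ m)
    (d : ℕ → ℕ) (h0 : d 0 = 1) (hdL : d (L + 1) = 1)
    (hdm : ∀ l, 1 ≤ l → l ≤ L → d l = m)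
    (W : (l : ℕ) → Ω → Matrix (Fin (d (l + 1))) (Fin (d l)) ℝ)
    (hWmeas : ∀ l i j, Measurable fun ω => W l ω i j)
    (hWL2 : ∀ l i j, MemLp (fun ω => W l ω i j) 2 μ)
    (hWindep : iIndepFun
      (fun p : (l : Fin (L + 1)) × (Fin (d (l.1 + 1)) × Fin (d l.1)) =>
        fun ω => W p.1 ω p.2.1 p.2.2) μ)
    (hWmean : ∀ l, l ≤ L → ∀ i j, ∫ ω, W l ω i j ∂μ = 0)
    (hvarFirst : ∀ i j, variance (fun ω => W 0 ω i j) μ = 2 / (m + 1))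
    (hvarLast : ∀ i j, variance (fun ω => W L ω i j) μ = 2 / (m + 1))
    (hvarMid : ∀ l, 1 ≤ l → l < L → ∀ i j, variance (fun ω => W l ω i j) μ = 1 / m)
    (σ : ℝ → ℝ) (hσ : Differentiable ℝ σ)
    (hσ' : Measurable (deriv σ)) (hσbound : ∀ t, |deriv σ t| ≤ 1)
    (x : ℝ) (i : Fin (d (L + 1))) :
    MemLp (fun ω =>
      deriv (fun t => mlpPre d (fun l => W l ω) (fun _ => 0) σ L t i) x) 2 μ ∧
    variance (fun ω =>
      deriv (fun t => mlpPre d (fun l => W l ω) (fun _ => 0) σ L t i) x) μ ≤ 4 / m :=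
  variance_mlp_deriv_le_general μ L m hL hm d h0 hdm W hWmeas hWL2 hWindep hWmean hvarFirst hvarLast
    hvarMid σ hσ hσ' hσbound x i
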